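/- arXiv:2510.11886 — 3 statements merged into one kernel-verified Lean document; each statement's English description precedes it below -/
import Mathlib

section
/- Let J and K be finite sets of natural numbers with |J| = p-2, |K| = p+2, and let a sign function be defined by sgn(S, i) = (-1)^(number of elements of S greater than i). Then for any family of scalars λ indexed by p-element subsets of {1,...,n}, the sum over 2-element subsets I = {i, i'} of K \ J of (-1)^(pairs(J△K, I)) λ_{J∪I} λ_{K\I} equals one half of the sum over ordered pairs (i, i') of distinct elements of K \ J of (-1)^(pairs(J△K, {i})) times the i'-indexed term of the usual Plücker expression for the pair (J∪{i}, K\{i}). Consequently, each Plücker-like expression P₂(J,K) equals the signed sum over i ∈ K\J of (-1)^(pairs(J△K,{i})) times the usual Plücker expression P₁(J∪{i}, K\{i}). -/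
open Finset

/-- `pairsCount A B` is the number of pairs `(a, b)` with `a ∈ A`, `b ∈ B` and `a > b`. -/
def pairsCount (A B : Finset ℕ) : ℕ := ((A ×ˢ B).filter fun x => x.2 < x.1).card

/-- The usual Plücker expression `P₁(J,K)` for coefficients `lam`. -/
def P1 (lam : Finset ℕ → ℝ) (J K : Finset ℕ) : ℝ :=
  ∑ i ∈ K \ J,
    (-1 : ℝ) ^ pairsCount (symmDiff J K) {i} * lam (insert i J) * lam (K.erase i)

/-- The Plücker-like expression `P₂(J,K)` for coefficients `lam`. -/
def P2 (lam : Finset ℕ → ℝ) (J K : Finset ℕ) : ℝ :=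
  ∑ I ∈ (K \ J).powersetCard 2,
    (-1 : ℝ) ^ pairsCount (symmDiff J K) I * lam (J ∪ I) * lam (K \ I)

lemma pairsCount_pair (A : Finset ℕ) {i j : ℕ} (h : i ≠ j) :
    pairsCount A {i, j} = pairsCount A {i} + pairsCount A {j} := by
  unfold pairsCount
  rw [Finset.card_filter, Finset.card_filter, Finset.card_filter,
    Finset.sum_product, Finset.sum_product, Finset.sum_product]
  rw [← Finset.sum_add_distrib]
  refine Finset.sum_congr rfl fun a _ => ?_
  rw [Finset.sum_pair h]
  simp [Finset.filter_singleton, apply_ite Finset.card]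

lemma symmDiff_insert_erase {J K : Finset ℕ} {i : ℕ} (hiK : i ∈ K) (hiJ : i ∉ J) :
    symmDiff (insert i J) (K.erase i) = symmDiff J K := by
  ext x
  by_cases hx : x = i <;>
    simp [Finset.mem_symmDiff, Finset.mem_insert, Finset.mem_erase, hx, hiK, hiJ]

lemma double_sum_pairs (T : Finset ℕ) (g : Finset ℕ → ℝ) :
    ∑ i ∈ T, ∑ j ∈ T.erase i, g {i, j} = 2 * ∑ I ∈ T.powersetCard 2, g I := by
  classical
  induction T using Finset.induction_on with
  | empty => rw [Finset.powersetCard_eq_empty.2 (by simp)]; simp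
  | @insert a T ha ih =>
    rw [Finset.sum_insert ha, Finset.erase_insert ha,
      Finset.powersetCard_succ_insert ha]
    have hdisj : Disjoint (T.powersetCard 2) ((T.powersetCard 1).image (insert a)) := by
      rw [Finset.disjoint_left]
      intro I hI hI'
      obtain ⟨I', hI', rfl⟩ := Finset.mem_image.1 hI'
      exact ha ((Finset.mem_powersetCard.1 hI).1 (Finset.mem_insert_self a I'))
    rw [Finset.sum_union hdisj]
    have himg : ∑ I ∈ (T.powersetCard 1).image (insert a), g I = ∑ j ∈ T, g {a, j} := by
      rw [Finset.sum_image, Finset.powersetCard_one, Finset.sum_map]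
      · rfl
      · intro I hI I' hI' hII
        have h1 : a ∉ I := fun h => ha ((Finset.mem_powersetCard.1 hI).1 h)
        have h2 : a ∉ I' := fun h => ha ((Finset.mem_powersetCard.1 hI').1 h)
        rw [← Finset.erase_insert h1, ← Finset.erase_insert h2, hII]
    rw [himg]
    have hrest : ∑ i ∈ T, ∑ j ∈ (insert a T).erase i, g {i, j}
        = ∑ i ∈ T, (g {i, a} + ∑ j ∈ T.erase i, g {i, j}) := by
      refine Finset.sum_congr rfl fun i hi => ?_
      have hia : i ≠ a := fun h => ha (h ▸ hi)
      rw [Finset.erase_insert_of_ne (Ne.symm hia), Finset.sum_insert (by simp [ha])]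
    rw [hrest, Finset.sum_add_distrib, ih]
    have : ∑ i ∈ T, g {i, a} = ∑ j ∈ T, g {a, j} :=
      Finset.sum_congr rfl fun i _ => by rw [Finset.pair_comm]
    rw [this]; ring

/-- Each Plücker-like expression is half of the corresponding signed sum over ordered pairs
of distinct indices of terms of usual Plücker expressions; consequently it equals the
(halved) signed sum over `i ∈ K \ J` of the usual Plücker expressions `P₁(J ∪ {i}, K \ {i})`. -/
theorem pluckerLike_eq_sum_of_plucker (n p : ℕ) (lam : Finset ℕ → ℝ)
    (J K : Finset ℕ) (hJn : J ⊆ Finset.Icc 1 n) (hKn : K ⊆ Finset.Icc 1 n)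
    (hJ : J.card = p - 2) (hK : K.card = p + 2) :
    P2 lam J K =
      (1 / 2 : ℝ) * ∑ i ∈ K \ J, ∑ i' ∈ (K \ J).erase i,
        (-1 : ℝ) ^ pairsCount (symmDiff J K) {i} *
          ((-1 : ℝ) ^ pairsCount (symmDiff (insert i J) (K.erase i)) {i'} *
            lam (insert i' (insert i J)) * lam ((K.erase i).erase i')) ∧
    P2 lam J K =
      (1 / 2 : ℝ) * ∑ i ∈ K \ J,
        (-1 : ℝ) ^ pairsCount (symmDiff J K) {i} * P1 lam (insert i J) (K.erase i) := by
  classical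
  set g : Finset ℕ → ℝ := fun I =>
    (-1 : ℝ) ^ pairsCount (symmDiff J K) I * lam (J ∪ I) * lam (K \ I) with hg
  have key : (∑ i ∈ K \ J, ∑ i' ∈ (K \ J).erase i,
      (-1 : ℝ) ^ pairsCount (symmDiff J K) {i} *
        ((-1 : ℝ) ^ pairsCount (symmDiff (insert i J) (K.erase i)) {i'} *
          lam (insert i' (insert i J)) * lam ((K.erase i).erase i')))
      = 2 * P2 lam J K := by
    rw [show P2 lam J K = ∑ I ∈ (K \ J).powersetCard 2, g I from rfl,
      ← double_sum_pairs (K \ J) g]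
    refine Finset.sum_congr rfl fun i hi => Finset.sum_congr rfl fun i' hi' => ?_
    have hiK : i ∈ K := (Finset.mem_sdiff.1 hi).1
    have hiJ : i ∉ J := (Finset.mem_sdiff.1 hi).2
    have hne : i ≠ i' := fun h => (Finset.mem_erase.1 hi').1 h.symm
    have h2 : insert i' (insert i J) = J ∪ {i, i'} := by
      ext x; simp [Finset.mem_insert, Finset.mem_union]; tauto
    have h3 : (K.erase i).erase i' = K \ {i, i'} := by
      ext x; simp [Finset.mem_erase, Finset.mem_sdiff]; tauto
    rw [symmDiff_insert_erase hiK hiJ, h2, h3, hg]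
    simp only [pairsCount_pair (symmDiff J K) hne, pow_add]
    ring
  constructor
  · rw [key]; ring
  · have hP1 : ∀ i ∈ K \ J,
        (-1 : ℝ) ^ pairsCount (symmDiff J K) {i} * P1 lam (insert i J) (K.erase i)
        = ∑ i' ∈ (K \ J).erase i,
          (-1 : ℝ) ^ pairsCount (symmDiff J K) {i} *
            ((-1 : ℝ) ^ pairsCount (symmDiff (insert i J) (K.erase i)) {i'} *
              lam (insert i' (insert i J)) * lam ((K.erase i).erase i')) := by
      intro i hi
      have hdom : K.erase i \ insert i J = (K \ J).erase i := by
        ext x; simp [Finset.mem_erase, Finset.mem_sdiff, Finset.mem_insert]; tauto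
      rw [P1, hdom, Finset.mul_sum]
    rw [Finset.sum_congr rfl hP1]
    rw [key]
    ring
end

section
/- Let Q be a (p-3)-subset of {1,...,n} and L = {l₁ < ... < l₆} a 6-subset disjoint from Q. For i ∈ {1,...,6} define E_i = Σ_{1 ≤ c < d ≤ 6, c,d ≠ i} (-1)^(c+d) λ_{Q ∪ {l_i, l_c, l_d}} λ_{Q ∪ L \ {l_i, l_c, l_d}}. Then for any i < i', the combination E_i + (-1)^(i+i') E_{i'} equals 2·(-1)^{i'} times the four-term expression Σ_{1 ≤ c ≤ 6, c ≠ i, i'} (-1)^c λ_{Q ∪ {l_i, l_{i'}, l_c}} λ_{Q ∪ L \ {l_i, l_{i'}, l_c}}. -/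
open Finset

set_option maxHeartbeats 3200000 in
/-- For a `(p-3)`-subset `Q` and a `6`-subset `L = {l₁ < ... < l₆}` disjoint from `Q`,
with `E_i` the 10-term Plücker-like expressions sharing the same terms, the combination
`E_i + (-1)^(i+i') E_{i'}` equals `2 (-1)^{i'}` times a four-term usual Plücker
expression. (Indices of `Fin 6` are 0-based; the parities of the exponents agree with
the 1-based ones of the paper.) -/
theorem E_combination {R : Type*} [CommRing R] (n p : ℕ) (hp : 3 ≤ p) (hpn : p ≤ n - 3)
    (lam : Finset ℕ → R) (Q : Finset ℕ) (hQ : Q.card = p - 3) (hQn : Q ⊆ Finset.Icc 1 n)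
    (l : Fin 6 → ℕ) (hl : StrictMono l) (hln : ∀ a, l a ∈ Finset.Icc 1 n)
    (hdisj : Disjoint Q (Finset.image l Finset.univ))
    (E : Fin 6 → R)
    (hE : ∀ i : Fin 6, E i = ∑ c : Fin 6, ∑ d : Fin 6,
      if c < d ∧ c ≠ i ∧ d ≠ i then
        (-1 : R) ^ ((c : ℕ) + (d : ℕ)) * lam (Q ∪ {l i, l c, l d}) *
          lam (Q ∪ (Finset.image l Finset.univ \ {l i, l c, l d}))
      else 0)
    (i i' : Fin 6) (hii' : i < i') :
    E i + (-1 : R) ^ ((i : ℕ) + (i' : ℕ)) * E i' =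
      2 * ∑ c : Fin 6,
        if c ≠ i ∧ c ≠ i' then
          (-1 : R) ^ ((i' : ℕ) + (c : ℕ)) * lam (Q ∪ {l i, l i', l c}) *
            lam (Q ∪ (Finset.image l Finset.univ \ {l i, l i', l c}))
        else 0 := by
  have hinj : Function.Injective l := hl.injective
  have key : ∀ (a b c d e f : Fin 6), (univ \ ({a, b, c} : Finset (Fin 6))) = {d, e, f} →
      Finset.image l Finset.univ \ ({l a, l b, l c} : Finset ℕ) = {l d, l e, l f} := by
    intro a b c d e f h
    rw [show ({l a, l b, l c} : Finset ℕ) = image l {a, b, c} by simp,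
      ← Finset.image_sdiff _ _ hinj, h]
    simp
  have P : ∀ (a b c d e f : Fin 6), ({a, b, c} : Finset (Fin 6)) = {d, e, f} →
      lam (Q ∪ {l a, l b, l c}) * lam (Q ∪ (Finset.image l Finset.univ \ {l a, l b, l c})) =
      lam (Q ∪ {l d, l e, l f}) * lam (Q ∪ (Finset.image l Finset.univ \ {l d, l e, l f})) := by
    intro a b c d e f h
    have : ({l a, l b, l c} : Finset ℕ) = {l d, l e, l f} := by
      rw [show ({l a, l b, l c} : Finset ℕ) = image l {a, b, c} by simp,
        show ({l d, l e, l f} : Finset ℕ) = image l {d, e, f} by simp, h]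
    rw [this]
  have Pc : ∀ (a b c d e f : Fin 6), (univ \ ({a, b, c} : Finset (Fin 6))) = {d, e, f} →
      lam (Q ∪ {l a, l b, l c}) * lam (Q ∪ (Finset.image l Finset.univ \ {l a, l b, l c})) =
      lam (Q ∪ {l d, l e, l f}) * lam (Q ∪ (Finset.image l Finset.univ \ {l d, l e, l f})) := by
    intro a b c d e f h
    have h2 : (univ \ ({d, e, f} : Finset (Fin 6))) = {a, b, c} := by
      rw [← h, Finset.sdiff_sdiff_eq_self (Finset.subset_univ _)]
    rw [key a b c d e f h, key d e f a b c h2, mul_comm]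
  fin_cases i <;> fin_cases i' <;>
    first
      | exact absurd hii' (by decide)
      | (simp only [hE, Fin.sum_univ_six]
         simp (config := { decide := true }) only [show ((0 : Fin 6) : ℕ) = 0 from rfl,
           show ((1 : Fin 6) : ℕ) = 1 from rfl, show ((2 : Fin 6) : ℕ) = 2 from rfl,
           show ((3 : Fin 6) : ℕ) = 3 from rfl, show ((4 : Fin 6) : ℕ) = 4 from rfl,
           show ((5 : Fin 6) : ℕ) = 5 from rfl,
           show (⟨0, by omega⟩ : Fin 6) = 0 from rfl, show (⟨1, by omega⟩ : Fin 6) = 1 from rfl,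
           show (⟨2, by omega⟩ : Fin 6) = 2 from rfl, show (⟨3, by omega⟩ : Fin 6) = 3 from rfl,
           show (⟨4, by omega⟩ : Fin 6) = 4 from rfl, show (⟨5, by omega⟩ : Fin 6) = 5 from rfl,
           if_true, if_false, mul_assoc]
         try skip)
  · rw [P 1 0 2 0 1 2 (by decide),
      P 1 0 3 0 1 3 (by decide),
      P 1 0 4 0 1 4 (by decide),
      P 1 0 5 0 1 5 (by decide),
      Pc 1 2 3 0 4 5 (by decide),
      Pc 1 2 4 0 3 5 (by decide),
      Pc 1 2 5 0 3 4 (by decide),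
      Pc 1 3 4 0 2 5 (by decide),
      Pc 1 3 5 0 2 4 (by decide),
      Pc 1 4 5 0 2 3 (by decide)]
    ring
  · rw [P 2 0 1 0 1 2 (by decide),
      P 2 0 3 0 2 3 (by decide),
      P 2 0 4 0 2 4 (by decide),
      P 2 0 5 0 2 5 (by decide),
      Pc 2 1 3 0 4 5 (by decide),
      Pc 2 1 4 0 3 5 (by decide),
      Pc 2 1 5 0 3 4 (by decide),
      Pc 2 3 4 0 1 5 (by decide),
      Pc 2 3 5 0 1 4 (by decide),
      Pc 2 4 5 0 1 3 (by decide),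
      P 0 2 1 0 1 2 (by decide)]
    ring
  · rw [P 3 0 1 0 1 3 (by decide),
      P 3 0 2 0 2 3 (by decide),
      P 3 0 4 0 3 4 (by decide),
      P 3 0 5 0 3 5 (by decide),
      Pc 3 1 2 0 4 5 (by decide),
      Pc 3 1 4 0 2 5 (by decide),
      Pc 3 1 5 0 2 4 (by decide),
      Pc 3 2 4 0 1 5 (by decide),
      Pc 3 2 5 0 1 4 (by decide),
      Pc 3 4 5 0 1 2 (by decide),
      P 0 3 1 0 1 3 (by decide),
      P 0 3 2 0 2 3 (by decide)]
    ring
  · rw [P 4 0 1 0 1 4 (by decide),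
      P 4 0 2 0 2 4 (by decide),
      P 4 0 3 0 3 4 (by decide),
      P 4 0 5 0 4 5 (by decide),
      Pc 4 1 2 0 3 5 (by decide),
      Pc 4 1 3 0 2 5 (by decide),
      Pc 4 1 5 0 2 3 (by decide),
      Pc 4 2 3 0 1 5 (by decide),
      Pc 4 2 5 0 1 3 (by decide),
      Pc 4 3 5 0 1 2 (by decide),
      P 0 4 1 0 1 4 (by decide),
      P 0 4 2 0 2 4 (by decide),
      P 0 4 3 0 3 4 (by decide)]
    ring
  · rw [P 5 0 1 0 1 5 (by decide),
      P 5 0 2 0 2 5 (by decide),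
      P 5 0 3 0 3 5 (by decide),
      P 5 0 4 0 4 5 (by decide),
      Pc 5 1 2 0 3 4 (by decide),
      Pc 5 1 3 0 2 4 (by decide),
      Pc 5 1 4 0 2 3 (by decide),
      Pc 5 2 3 0 1 4 (by decide),
      Pc 5 2 4 0 1 3 (by decide),
      Pc 5 3 4 0 1 2 (by decide),
      P 0 5 1 0 1 5 (by decide),
      P 0 5 2 0 2 5 (by decide),
      P 0 5 3 0 3 5 (by decide),
      P 0 5 4 0 4 5 (by decide)]
    ring
  · rw [P 1 0 2 0 1 2 (by decide),
      P 1 0 3 0 1 3 (by decide),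
      P 1 0 4 0 1 4 (by decide),
      P 1 0 5 0 1 5 (by decide),
      Pc 1 2 3 0 4 5 (by decide),
      Pc 1 2 4 0 3 5 (by decide),
      Pc 1 2 5 0 3 4 (by decide),
      Pc 1 3 4 0 2 5 (by decide),
      Pc 1 3 5 0 2 4 (by decide),
      Pc 1 4 5 0 2 3 (by decide),
      P 2 0 1 0 1 2 (by decide),
      P 2 0 3 0 2 3 (by decide),
      P 2 0 4 0 2 4 (by decide),
      P 2 0 5 0 2 5 (by decide),
      Pc 2 1 3 0 4 5 (by decide),
      Pc 2 1 4 0 3 5 (by decide),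
      Pc 2 1 5 0 3 4 (by decide),
      Pc 2 3 4 0 1 5 (by decide),
      Pc 2 3 5 0 1 4 (by decide),
      Pc 2 4 5 0 1 3 (by decide),
      P 1 2 0 0 1 2 (by decide)]
    ring
  · rw [P 1 0 2 0 1 2 (by decide),
      P 1 0 3 0 1 3 (by decide),
      P 1 0 4 0 1 4 (by decide),
      P 1 0 5 0 1 5 (by decide),
      Pc 1 2 3 0 4 5 (by decide),
      Pc 1 2 4 0 3 5 (by decide),
      Pc 1 2 5 0 3 4 (by decide),
      Pc 1 3 4 0 2 5 (by decide),
      Pc 1 3 5 0 2 4 (by decide),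
      Pc 1 4 5 0 2 3 (by decide),
      P 3 0 1 0 1 3 (by decide),
      P 3 0 2 0 2 3 (by decide),
      P 3 0 4 0 3 4 (by decide),
      P 3 0 5 0 3 5 (by decide),
      Pc 3 1 2 0 4 5 (by decide),
      Pc 3 1 4 0 2 5 (by decide),
      Pc 3 1 5 0 2 4 (by decide),
      Pc 3 2 4 0 1 5 (by decide),
      Pc 3 2 5 0 1 4 (by decide),
      Pc 3 4 5 0 1 2 (by decide),
      P 1 3 0 0 1 3 (by decide),
      Pc 1 3 2 0 4 5 (by decide)]
    ring
  · rw [P 1 0 2 0 1 2 (by decide),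
      P 1 0 3 0 1 3 (by decide),
      P 1 0 4 0 1 4 (by decide),
      P 1 0 5 0 1 5 (by decide),
      Pc 1 2 3 0 4 5 (by decide),
      Pc 1 2 4 0 3 5 (by decide),
      Pc 1 2 5 0 3 4 (by decide),
      Pc 1 3 4 0 2 5 (by decide),
      Pc 1 3 5 0 2 4 (by decide),
      Pc 1 4 5 0 2 3 (by decide),
      P 4 0 1 0 1 4 (by decide),
      P 4 0 2 0 2 4 (by decide),
      P 4 0 3 0 3 4 (by decide),
      P 4 0 5 0 4 5 (by decide),
      Pc 4 1 2 0 3 5 (by decide),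
      Pc 4 1 3 0 2 5 (by decide),
      Pc 4 1 5 0 2 3 (by decide),
      Pc 4 2 3 0 1 5 (by decide),
      Pc 4 2 5 0 1 3 (by decide),
      Pc 4 3 5 0 1 2 (by decide),
      P 1 4 0 0 1 4 (by decide),
      Pc 1 4 2 0 3 5 (by decide),
      Pc 1 4 3 0 2 5 (by decide)]
    ring
  · rw [P 1 0 2 0 1 2 (by decide),
      P 1 0 3 0 1 3 (by decide),
      P 1 0 4 0 1 4 (by decide),
      P 1 0 5 0 1 5 (by decide),
      Pc 1 2 3 0 4 5 (by decide),
      Pc 1 2 4 0 3 5 (by decide),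
      Pc 1 2 5 0 3 4 (by decide),
      Pc 1 3 4 0 2 5 (by decide),
      Pc 1 3 5 0 2 4 (by decide),
      Pc 1 4 5 0 2 3 (by decide),
      P 5 0 1 0 1 5 (by decide),
      P 5 0 2 0 2 5 (by decide),
      P 5 0 3 0 3 5 (by decide),
      P 5 0 4 0 4 5 (by decide),
      Pc 5 1 2 0 3 4 (by decide),
      Pc 5 1 3 0 2 4 (by decide),
      Pc 5 1 4 0 2 3 (by decide),
      Pc 5 2 3 0 1 4 (by decide),
      Pc 5 2 4 0 1 3 (by decide),
      Pc 5 3 4 0 1 2 (by decide),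
      P 1 5 0 0 1 5 (by decide),
      Pc 1 5 2 0 3 4 (by decide),
      Pc 1 5 3 0 2 4 (by decide),
      Pc 1 5 4 0 2 3 (by decide)]
    ring
  · rw [P 2 0 1 0 1 2 (by decide),
      P 2 0 3 0 2 3 (by decide),
      P 2 0 4 0 2 4 (by decide),
      P 2 0 5 0 2 5 (by decide),
      Pc 2 1 3 0 4 5 (by decide),
      Pc 2 1 4 0 3 5 (by decide),
      Pc 2 1 5 0 3 4 (by decide),
      Pc 2 3 4 0 1 5 (by decide),
      Pc 2 3 5 0 1 4 (by decide),
      Pc 2 4 5 0 1 3 (by decide),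
      P 3 0 1 0 1 3 (by decide),
      P 3 0 2 0 2 3 (by decide),
      P 3 0 4 0 3 4 (by decide),
      P 3 0 5 0 3 5 (by decide),
      Pc 3 1 2 0 4 5 (by decide),
      Pc 3 1 4 0 2 5 (by decide),
      Pc 3 1 5 0 2 4 (by decide),
      Pc 3 2 4 0 1 5 (by decide),
      Pc 3 2 5 0 1 4 (by decide),
      Pc 3 4 5 0 1 2 (by decide),
      P 2 3 0 0 2 3 (by decide),
      Pc 2 3 1 0 4 5 (by decide)]
    ring
  · rw [P 2 0 1 0 1 2 (by decide),
      P 2 0 3 0 2 3 (by decide),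
      P 2 0 4 0 2 4 (by decide),
      P 2 0 5 0 2 5 (by decide),
      Pc 2 1 3 0 4 5 (by decide),
      Pc 2 1 4 0 3 5 (by decide),
      Pc 2 1 5 0 3 4 (by decide),
      Pc 2 3 4 0 1 5 (by decide),
      Pc 2 3 5 0 1 4 (by decide),
      Pc 2 4 5 0 1 3 (by decide),
      P 4 0 1 0 1 4 (by decide),
      P 4 0 2 0 2 4 (by decide),
      P 4 0 3 0 3 4 (by decide),
      P 4 0 5 0 4 5 (by decide),
      Pc 4 1 2 0 3 5 (by decide),
      Pc 4 1 3 0 2 5 (by decide),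
      Pc 4 1 5 0 2 3 (by decide),
      Pc 4 2 3 0 1 5 (by decide),
      Pc 4 2 5 0 1 3 (by decide),
      Pc 4 3 5 0 1 2 (by decide),
      P 2 4 0 0 2 4 (by decide),
      Pc 2 4 1 0 3 5 (by decide),
      Pc 2 4 3 0 1 5 (by decide)]
    ring
  · rw [P 2 0 1 0 1 2 (by decide),
      P 2 0 3 0 2 3 (by decide),
      P 2 0 4 0 2 4 (by decide),
      P 2 0 5 0 2 5 (by decide),
      Pc 2 1 3 0 4 5 (by decide),
      Pc 2 1 4 0 3 5 (by decide),
      Pc 2 1 5 0 3 4 (by decide),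
      Pc 2 3 4 0 1 5 (by decide),
      Pc 2 3 5 0 1 4 (by decide),
      Pc 2 4 5 0 1 3 (by decide),
      P 5 0 1 0 1 5 (by decide),
      P 5 0 2 0 2 5 (by decide),
      P 5 0 3 0 3 5 (by decide),
      P 5 0 4 0 4 5 (by decide),
      Pc 5 1 2 0 3 4 (by decide),
      Pc 5 1 3 0 2 4 (by decide),
      Pc 5 1 4 0 2 3 (by decide),
      Pc 5 2 3 0 1 4 (by decide),
      Pc 5 2 4 0 1 3 (by decide),
      Pc 5 3 4 0 1 2 (by decide),
      P 2 5 0 0 2 5 (by decide),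
      Pc 2 5 1 0 3 4 (by decide),
      Pc 2 5 3 0 1 4 (by decide),
      Pc 2 5 4 0 1 3 (by decide)]
    ring
  · rw [P 3 0 1 0 1 3 (by decide),
      P 3 0 2 0 2 3 (by decide),
      P 3 0 4 0 3 4 (by decide),
      P 3 0 5 0 3 5 (by decide),
      Pc 3 1 2 0 4 5 (by decide),
      Pc 3 1 4 0 2 5 (by decide),
      Pc 3 1 5 0 2 4 (by decide),
      Pc 3 2 4 0 1 5 (by decide),
      Pc 3 2 5 0 1 4 (by decide),
      Pc 3 4 5 0 1 2 (by decide),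
      P 4 0 1 0 1 4 (by decide),
      P 4 0 2 0 2 4 (by decide),
      P 4 0 3 0 3 4 (by decide),
      P 4 0 5 0 4 5 (by decide),
      Pc 4 1 2 0 3 5 (by decide),
      Pc 4 1 3 0 2 5 (by decide),
      Pc 4 1 5 0 2 3 (by decide),
      Pc 4 2 3 0 1 5 (by decide),
      Pc 4 2 5 0 1 3 (by decide),
      Pc 4 3 5 0 1 2 (by decide),
      P 3 4 0 0 3 4 (by decide),
      Pc 3 4 1 0 2 5 (by decide),
      Pc 3 4 2 0 1 5 (by decide)]
    ring
  · rw [P 3 0 1 0 1 3 (by decide),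
      P 3 0 2 0 2 3 (by decide),
      P 3 0 4 0 3 4 (by decide),
      P 3 0 5 0 3 5 (by decide),
      Pc 3 1 2 0 4 5 (by decide),
      Pc 3 1 4 0 2 5 (by decide),
      Pc 3 1 5 0 2 4 (by decide),
      Pc 3 2 4 0 1 5 (by decide),
      Pc 3 2 5 0 1 4 (by decide),
      Pc 3 4 5 0 1 2 (by decide),
      P 5 0 1 0 1 5 (by decide),
      P 5 0 2 0 2 5 (by decide),
      P 5 0 3 0 3 5 (by decide),
      P 5 0 4 0 4 5 (by decide),
      Pc 5 1 2 0 3 4 (by decide),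
      Pc 5 1 3 0 2 4 (by decide),
      Pc 5 1 4 0 2 3 (by decide),
      Pc 5 2 3 0 1 4 (by decide),
      Pc 5 2 4 0 1 3 (by decide),
      Pc 5 3 4 0 1 2 (by decide),
      P 3 5 0 0 3 5 (by decide),
      Pc 3 5 1 0 2 4 (by decide),
      Pc 3 5 2 0 1 4 (by decide),
      Pc 3 5 4 0 1 2 (by decide)]
    ring
  · rw [P 4 0 1 0 1 4 (by decide),
      P 4 0 2 0 2 4 (by decide),
      P 4 0 3 0 3 4 (by decide),
      P 4 0 5 0 4 5 (by decide),
      Pc 4 1 2 0 3 5 (by decide),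
      Pc 4 1 3 0 2 5 (by decide),
      Pc 4 1 5 0 2 3 (by decide),
      Pc 4 2 3 0 1 5 (by decide),
      Pc 4 2 5 0 1 3 (by decide),
      Pc 4 3 5 0 1 2 (by decide),
      P 5 0 1 0 1 5 (by decide),
      P 5 0 2 0 2 5 (by decide),
      P 5 0 3 0 3 5 (by decide),
      P 5 0 4 0 4 5 (by decide),
      Pc 5 1 2 0 3 4 (by decide),
      Pc 5 1 3 0 2 4 (by decide),
      Pc 5 1 4 0 2 3 (by decide),
      Pc 5 2 3 0 1 4 (by decide),
      Pc 5 2 4 0 1 3 (by decide),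
      Pc 5 3 4 0 1 2 (by decide),
      P 4 5 0 0 4 5 (by decide),
      Pc 4 5 1 0 2 3 (by decide),
      Pc 4 5 2 0 1 3 (by decide),
      Pc 4 5 3 0 1 2 (by decide)]
    ring
end

section
/- Let L = {l₁ < ... < l₆} and fix i ≠ i' in {1,...,6}. In the double sum Σ_{1 ≤ c < d ≤ 6, c,d ∉ {i,i'}} (-1)^(c+d) [λ_{Q∪{l_i,l_c,l_d}} λ_{Q∪L\{l_i,l_c,l_d}} + (-1)^(i+i') λ_{Q∪{l_{i'},l_c,l_d}} λ_{Q∪L\{l_{i'},l_c,l_d}}], all terms cancel pairwise: the term of the first sum indexed by (c,d) cancels with the term of the second sum indexed by the complementary pair (c',d') = {1,...,6} \ {i,i',c,d}, since L \ {l_i,l_c,l_d} = {l_{i'},l_{c'},l_{d'}} and (-1)^(c+d) = -(-1)^(i+i')·(-1)^(c'+d'). -/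
open Finset

/-- Pairwise cancellation of terms in `E_i + (-1)^(i+i') E_{i'}`: if the six indices
`i, i', c, d, c', d'` exhaust `Fin 6`, with `c < d` and `c' < d'`, then
`L \ {l i, l c, l d} = {l i', l c', l d'}`, the signs satisfy
`(-1)^(c+d) = -(-1)^(i+i') (-1)^(c'+d')`, and the term of the first sum indexed by
`(c, d)` cancels with the term of the second sum indexed by `(c', d')`. -/
theorem pairwise_cancellation {R : Type*} [CommRing R] (lam : Finset ℕ → R)
    (Q : Finset ℕ) (l : Fin 6 → ℕ) (hl : StrictMono l)
    (hdisj : Disjoint Q (Finset.image l Finset.univ))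
    (i i' c d c' d' : Fin 6) (hii' : i ≠ i') (hcd : c < d) (hc'd' : c' < d')
    (hpart : ({i, i', c, d, c', d'} : Finset (Fin 6)) = Finset.univ) :
    Finset.image l Finset.univ \ {l i, l c, l d} = {l i', l c', l d'} ∧
    ((-1 : R) ^ ((c : ℕ) + (d : ℕ)) =
      -((-1 : R) ^ ((i : ℕ) + (i' : ℕ)) * (-1 : R) ^ ((c' : ℕ) + (d' : ℕ)))) ∧
    ((-1 : R) ^ ((c : ℕ) + (d : ℕ)) * lam (Q ∪ {l i, l c, l d}) *
        lam (Q ∪ (Finset.image l Finset.univ \ {l i, l c, l d})) +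
      (-1 : R) ^ ((i : ℕ) + (i' : ℕ)) *
        ((-1 : R) ^ ((c' : ℕ) + (d' : ℕ)) * lam (Q ∪ {l i', l c', l d'}) *
          lam (Q ∪ (Finset.image l Finset.univ \ {l i', l c', l d'}))) = 0) := by
  -- nodup of the six indices
  have hfin : ([i,i',c,d,c',d'] : List (Fin 6)).toFinset = ({i, i', c, d, c', d'} : Finset (Fin 6)) := by
    simp
  have h6 : ([i,i',c,d,c',d'] : List (Fin 6)).toFinset.card = 6 := by
    rw [hfin, hpart]; simp
  rw [List.card_toFinset] at h6
  have hnd : ([i,i',c,d,c',d'] : List (Fin 6)).Nodup := by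
    rw [← List.dedup_eq_self]
    exact (List.dedup_sublist _).eq_of_length h6
  simp only [List.nodup_cons, List.mem_cons, List.mem_singleton, List.not_mem_nil,
    or_false, List.nodup_nil, and_true, not_or] at hnd
  obtain ⟨⟨h1,h2,h3,h4,h5⟩,⟨h6',h7,h8,h9⟩,⟨h10,h11,h12⟩,⟨h13,h14⟩,h15,-⟩ := hnd
  -- sum of indices = 15
  have hsum : (i:ℕ)+(i':ℕ)+(c:ℕ)+(d:ℕ)+(c':ℕ)+(d':ℕ) = 15 := by
    have : ∑ x ∈ ({i, i', c, d, c', d'} : Finset (Fin 6)), (x:ℕ) = 15 := by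
      rw [hpart]; decide
    rw [Finset.sum_insert (by simp [h1,h2,h3,h4,h5]),
        Finset.sum_insert (by simp [h6',h7,h8,h9]),
        Finset.sum_insert (by simp [h10,h11,h12]),
        Finset.sum_insert (by simp [h13,h14]),
        Finset.sum_insert (by simp [h15]), Finset.sum_singleton] at this
    omega
  -- distinct values of l
  have inj := hl.injective
  have e1 := inj.ne h1; have e2 := inj.ne h2; have e3 := inj.ne h3
  have e4 := inj.ne h4; have e5 := inj.ne h5; have e6 := inj.ne h6'
  have e7 := inj.ne h7; have e8 := inj.ne h8; have e9 := inj.ne h9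
  have e10 := inj.ne h10; have e11 := inj.ne h11; have e12 := inj.ne h12
  have e13 := inj.ne h13; have e14 := inj.ne h14; have e15 := inj.ne h15
  have himg : Finset.image l Finset.univ = {l i, l i', l c, l d, l c', l d'} := by
    rw [← hpart]; simp [Finset.image_insert]
  have hs1 : Finset.image l Finset.univ \ {l i, l c, l d} = {l i', l c', l d'} := by
    rw [himg]; ext x
    simp only [Finset.mem_sdiff, Finset.mem_insert, Finset.mem_singleton, not_or]
    constructor
    · rintro ⟨(rfl|rfl|rfl|rfl|rfl|rfl), hx⟩
      · exact absurd rfl hx.1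
      · exact Or.inl rfl
      · exact absurd rfl hx.2.1
      · exact absurd rfl hx.2.2
      · exact Or.inr (Or.inl rfl)
      · exact Or.inr (Or.inr rfl)
    · rintro (rfl|rfl|rfl)
      · exact ⟨Or.inr (Or.inl rfl), e1.symm, e6, e7⟩
      · exact ⟨Or.inr (Or.inr (Or.inr (Or.inr (Or.inl rfl)))), e4.symm, e11.symm, e13.symm⟩
      · exact ⟨Or.inr (Or.inr (Or.inr (Or.inr (Or.inr rfl)))), e5.symm, e12.symm, e14.symm⟩
  have hs2 : Finset.image l Finset.univ \ {l i', l c', l d'} = {l i, l c, l d} := by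
    rw [himg]; ext x
    simp only [Finset.mem_sdiff, Finset.mem_insert, Finset.mem_singleton, not_or]
    constructor
    · rintro ⟨(rfl|rfl|rfl|rfl|rfl|rfl), hx⟩
      · exact Or.inl rfl
      · exact absurd rfl hx.1
      · exact Or.inr (Or.inl rfl)
      · exact Or.inr (Or.inr rfl)
      · exact absurd rfl hx.2.1
      · exact absurd rfl hx.2.2
    · rintro (rfl|rfl|rfl)
      · exact ⟨Or.inl rfl, e1, e4, e5⟩
      · exact ⟨Or.inr (Or.inr (Or.inl rfl)), e6.symm, e11, e12⟩
      · exact ⟨Or.inr (Or.inr (Or.inr (Or.inl rfl))), e7.symm, e13, e14⟩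
  have hsgn : (-1 : R) ^ ((c : ℕ) + (d : ℕ)) =
      -((-1 : R) ^ ((i : ℕ) + (i' : ℕ)) * (-1 : R) ^ ((c' : ℕ) + (d' : ℕ))) := by
    have h15 : (-1:R) ^ (((c:ℕ)+(d:ℕ)) + (((i:ℕ)+(i':ℕ)) + ((c':ℕ)+(d':ℕ)))) = -1 := by
      rw [show ((c:ℕ)+(d:ℕ)) + (((i:ℕ)+(i':ℕ)) + ((c':ℕ)+(d':ℕ))) = 15 by omega]
      norm_num
    have hinv : (-1:R) ^ (((i:ℕ)+(i':ℕ)) + ((c':ℕ)+(d':ℕ))) *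
        (-1:R) ^ (((i:ℕ)+(i':ℕ)) + ((c':ℕ)+(d':ℕ))) = 1 := by
      rw [← pow_add]; exact Even.neg_one_pow ⟨_, rfl⟩
    calc (-1:R) ^ ((c:ℕ)+(d:ℕ))
        = (-1:R) ^ ((c:ℕ)+(d:ℕ)) * ((-1:R) ^ (((i:ℕ)+(i':ℕ)) + ((c':ℕ)+(d':ℕ))) *
            (-1:R) ^ (((i:ℕ)+(i':ℕ)) + ((c':ℕ)+(d':ℕ)))) := by rw [hinv, mul_one]
      _ = ((-1:R) ^ (((c:ℕ)+(d:ℕ)) + (((i:ℕ)+(i':ℕ)) + ((c':ℕ)+(d':ℕ))))) *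
            (-1:R) ^ (((i:ℕ)+(i':ℕ)) + ((c':ℕ)+(d':ℕ))) := by rw [pow_add]; ring
      _ = -((-1 : R) ^ ((i : ℕ) + (i' : ℕ)) * (-1 : R) ^ ((c' : ℕ) + (d' : ℕ))) := by
            rw [h15, pow_add]; ring
  refine ⟨hs1, hsgn, ?_⟩
  rw [hs1, hs2, hsgn]; ring
end
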